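/- The Goryachev Hamiltonian H₂ = J₁² + J₂² + (4/3)J₃² + c·x₁/x₃^{2/3} + d/x₃^{2/3} Poisson-commutes with its cubic integral K₂ given by formula (K) with α = 1/3, n(x₃) = c·x₃^{1/3}, g = d/n², ℓ = n n″/n′, f as in (fgml), on the set where x₃ > 0, x₁²+x₂²+x₃² = a², and x₁J₁+x₂J₂+x₃J₃ = 0. -/

import Mathlib

open scoped BigOperators

/-- Index of `x_i` (i = 0,1,2) in phase space `ℝ⁶ = Fin 6 → ℝ`. -/
def xIdx (i : Fin 3) : Fin 6 := ⟨i.1, by omega⟩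
/-- Index of `J_i` (i = 0,1,2) in phase space. -/
def jIdx (i : Fin 3) : Fin 6 := ⟨i.1 + 3, by omega⟩

/-- Partial derivative of `F` in the `i`-th coordinate direction. -/
noncomputable def pd (i : Fin 6) (F : (Fin 6 → ℝ) → ℝ) (z : Fin 6 → ℝ) : ℝ :=
  fderiv ℝ F z (Pi.single i 1)

/-- Levi-Civita symbol on `Fin 3`. -/
def eps (i j k : Fin 3) : ℝ :=
  if (i,j,k) = (0,1,2) ∨ (i,j,k) = (1,2,0) ∨ (i,j,k) = (2,0,1) then 1
  else if (i,j,k) = (1,0,2) ∨ (i,j,k) = (2,1,0) ∨ (i,j,k) = (0,2,1) then -1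
  else 0

/-- The e(3) Poisson bracket on smooth functions of `(x, J) ∈ ℝ⁶`, generated by
`{J_i,J_j} = ε_{ijk} J_k`, `{J_i,x_j} = ε_{ijk} x_k`, `{x_i,x_j} = 0`. -/
noncomputable def e3Bracket (F G : (Fin 6 → ℝ) → ℝ) (z : Fin 6 → ℝ) : ℝ :=
  ∑ i : Fin 3, ∑ j : Fin 3, ∑ k : Fin 3, eps i j k *
    ( z (jIdx k) * pd (jIdx i) F z * pd (jIdx j) G z
    + z (xIdx k) * pd (jIdx i) F z * pd (xIdx j) G z
    + z (xIdx k) * pd (xIdx i) F z * pd (jIdx j) G z )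

/-!
For `n = c x₃^{1/3}` every coefficient of the cubic integral is a monomial in `r = x₃^{1/3}`:
`m = -c r⁻²`, `ℓ = -(2c/3) r⁻²`, `g = (d/c²) r⁻²`, and in (fgml) the terms carrying `a²` cancel,
leaving `f ≡ 1`. Writing the e(3) bracket as
`J · (∇_J H × ∇_J K) + x · (∇_J H × ∇_x K + ∇_x H × ∇_J K)`, a direct computation then gives
`{H, K} = -(2c/3) r⁻² J₂ (x · J)`, which vanishes on `x · J = 0`.
-/

open Matrix Set

def angMom (z : Fin 6 → ℝ) : Fin 3 → ℝ := fun i => z (jIdx i)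

def position (z : Fin 6 → ℝ) : Fin 3 → ℝ := fun i => z (xIdx i)

noncomputable def gradJ (F : (Fin 6 → ℝ) → ℝ) (z : Fin 6 → ℝ) : Fin 3 → ℝ :=
  fun i => pd (jIdx i) F z

noncomputable def gradX (F : (Fin 6 → ℝ) → ℝ) (z : Fin 6 → ℝ) : Fin 3 → ℝ :=
  fun i => pd (xIdx i) F z

theorem e3Bracket_eq_dotProduct_cross (F G : (Fin 6 → ℝ) → ℝ) (z : Fin 6 → ℝ) :
    e3Bracket F G z = angMom z ⬝ᵥ (gradJ F z ⨯₃ gradJ G z)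
      + position z ⬝ᵥ (gradJ F z ⨯₃ gradX G z + gradX F z ⨯₃ gradJ G z) := by
  simp only [e3Bracket, eps, Fin.sum_univ_three, cross_apply, dotProduct, angMom, position,
    gradJ, gradX, Fin.isValue, Prod.mk.injEq, zero_ne_one, Fin.reduceEq, and_false,
    and_true, or_self, ↓reduceIte, zero_mul, one_ne_zero, add_zero, or_false, one_mul, zero_add,
    or_true, neg_mul, neg_add_rev, Nat.succ_eq_add_one, Nat.reduceAdd, cons_val_zero,
    cons_val_one, cons_val, Pi.add_apply]
  ring

theorem hasDerivAt_const_mul_cbrt_zpow (k : ℝ) (j : ℤ) {t : ℝ} (ht : 0 < t) :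
    HasDerivAt (fun s => k * (s ^ ((1:ℝ)/3)) ^ j) (k * j / 3 * (t ^ ((1:ℝ)/3)) ^ (j - 3)) t := by
  set r := t ^ ((1:ℝ)/3)
  have hr : r ≠ 0 := (Real.rpow_pos_of_pos ht _).ne'
  have hr3 : r ^ 3 = t := by
    rw [← Real.rpow_natCast, ← Real.rpow_mul ht.le]; norm_num
  have hcbrt : HasDerivAt (fun s => s ^ ((1:ℝ)/3)) (1 / (3 * r ^ 2)) t := by
    refine (Real.hasDerivAt_rpow_const (Or.inl ht.ne')).congr_deriv ?_
    calc (1:ℝ) / 3 * t ^ ((1:ℝ)/3 - 1) = 1 / 3 * (r / r ^ 3) := by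
          rw [Real.rpow_sub_one ht.ne', hr3]
      _ = 1 / (3 * r ^ 2) := by field_simp
  have hzpow : r ^ (j - 3) = r ^ (j - 1) / r ^ 2 := by
    rw [← zpow_natCast, ← zpow_sub₀ hr]; ring_nf
  refine (((hasDerivAt_zpow j r (Or.inl hr)).comp t hcbrt).const_mul k).congr_deriv ?_
  rw [hzpow]
  field_simp

section CbrtMonomial

variable {F : ℝ → ℝ} {k : ℝ} {j : ℤ}

theorem hasDerivAt_of_eqOn_cbrt_zpow (hF : EqOn F (fun s => k * (s ^ ((1:ℝ)/3)) ^ j) (Ioi 0))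
    {t : ℝ} (ht : 0 < t) : HasDerivAt F (k * j / 3 * (t ^ ((1:ℝ)/3)) ^ (j - 3)) t :=
  (hasDerivAt_const_mul_cbrt_zpow k j ht).congr_of_eventuallyEq
    (hF.eventuallyEq_of_mem (Ioi_mem_nhds ht))

theorem deriv_eqOn_cbrt_zpow (hF : EqOn F (fun s => k * (s ^ ((1:ℝ)/3)) ^ j) (Ioi 0)) :
    EqOn (deriv F) (fun s => k * j / 3 * (s ^ ((1:ℝ)/3)) ^ (j - 3)) (Ioi 0) :=
  fun _ hs => (hasDerivAt_of_eqOn_cbrt_zpow hF hs).deriv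

end CbrtMonomial

namespace GoryachevProfile

variable {a c d α : ℝ} {n m ℓ g f : ℝ → ℝ}

theorem n_eqOn (hn : n = fun t => c * t ^ ((1:ℝ)/3)) :
    EqOn n (fun s => c * (s ^ ((1:ℝ)/3)) ^ (1:ℤ)) (Ioi 0) := by
  intro s _
  simp [hn]

theorem m_eqOn (hα : α = 1/3) (hn : EqOn n (fun s => c * (s ^ ((1:ℝ)/3)) ^ (1:ℤ)) (Ioi 0))
    (hm : m = fun t => -(deriv n t) / α) :
    EqOn m (fun s => -c * (s ^ ((1:ℝ)/3)) ^ (-2:ℤ)) (Ioi 0) := by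
  intro s hs
  rw [hm]
  beta_reduce
  rw [deriv_eqOn_cbrt_zpow hn hs, hα]
  norm_num
  ring

theorem ℓ_eqOn (hc : c ≠ 0) (hn : EqOn n (fun s => c * (s ^ ((1:ℝ)/3)) ^ (1:ℤ)) (Ioi 0))
    (hℓ : ℓ = fun t => n t * (deriv (deriv n) t) / deriv n t) :
    EqOn ℓ (fun s => -(2*c/3) * (s ^ ((1:ℝ)/3)) ^ (-2:ℤ)) (Ioi 0) := by
  intro s hs
  have hn' := deriv_eqOn_cbrt_zpow hn
  have hr : s ^ ((1:ℝ)/3) ≠ 0 := (Real.rpow_pos_of_pos hs _).ne'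
  rw [hℓ]
  beta_reduce
  rw [hn hs, hn' hs, deriv_eqOn_cbrt_zpow hn' hs]
  norm_num
  field_simp

theorem g_eqOn (hn : n = fun t => c * t ^ ((1:ℝ)/3)) (hg : g = fun t => d / (n t)^2) :
    EqOn g (fun s => d / c^2 * (s ^ ((1:ℝ)/3)) ^ (-2:ℤ)) (Ioi 0) := by
  intro s _
  rw [hg, hn]
  beta_reduce
  rw [_root_.zpow_neg, zpow_ofNat]
  ring

theorem f_eqOn (hc : c ≠ 0) (hα : α = 1/3)
    (hn : EqOn n (fun s => c * (s ^ ((1:ℝ)/3)) ^ (1:ℤ)) (Ioi 0))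
    (hm : EqOn m (fun s => -c * (s ^ ((1:ℝ)/3)) ^ (-2:ℤ)) (Ioi 0))
    (hℓ : EqOn ℓ (fun s => -(2*c/3) * (s ^ ((1:ℝ)/3)) ^ (-2:ℤ)) (Ioi 0))
    (hf : f = fun t => 1 - 3*α^2
        - α * (3*t*(m t) - 2*(a^2 - t^2)*(deriv m t)) / n t
        + (t*(ℓ t) - (a^2 - t^2)*(deriv ℓ t)) / n t) :
    EqOn f (fun _ => 1) (Ioi 0) := by
  intro s (hs : 0 < s)
  have hr3 : (s ^ ((1:ℝ)/3)) ^ 3 = s := by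
    rw [← Real.rpow_natCast, ← Real.rpow_mul hs.le]; norm_num
  have hr : 0 < s ^ ((1:ℝ)/3) := Real.rpow_pos_of_pos hs _
  rw [hf]
  beta_reduce
  rw [hn hs, hm hs, hℓ hs, deriv_eqOn_cbrt_zpow hm hs, deriv_eqOn_cbrt_zpow hℓ hs, hα]
  beta_reduce
  generalize s ^ ((1:ℝ)/3) = r at hr3 hr ⊢
  subst hr3
  norm_num
  field_simp
  ring

end GoryachevProfile

noncomputable def hamiltonian (m g : ℝ → ℝ) (z : Fin 6 → ℝ) : ℝ :=
  (z (jIdx 0))^2 + (z (jIdx 1))^2 + (4/3) * (z (jIdx 2))^2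
    + m (z (xIdx 2)) * z (xIdx 0) + g (z (xIdx 2))

noncomputable def cubicIntegral (α : ℝ) (n ℓ g f : ℝ → ℝ) (z : Fin 6 → ℝ) : ℝ :=
  -2*α*(z (jIdx 2)) *
      (-(α^2)*(z (jIdx 2))^2 + (z (jIdx 0))^2 + (z (jIdx 1))^2
        + f (z (xIdx 2)) * (z (jIdx 2))^2 + g (z (xIdx 2)))
    - n (z (xIdx 2)) * z (jIdx 0)
    - ℓ (z (xIdx 2)) * z (xIdx 0) * z (jIdx 2)

section Gradients

variable {z : Fin 6 → ℝ}

theorem hasFDerivAt_coord (i : Fin 6) :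
    HasFDerivAt (fun y : Fin 6 → ℝ => y i)
      (ContinuousLinearMap.proj (R := ℝ) (φ := fun _ : Fin 6 => ℝ) i) z :=
  hasFDerivAt_apply i z

theorem fderiv_hamiltonian_apply {m g : ℝ → ℝ} {m' g' : ℝ}
    (hm : HasDerivAt m m' (z (xIdx 2))) (hg : HasDerivAt g g' (z (xIdx 2))) (v : Fin 6 → ℝ) :
    fderiv ℝ (hamiltonian m g) z v
      = 2 * z (jIdx 0) * v (jIdx 0) + 2 * z (jIdx 1) * v (jIdx 1) + 8/3 * z (jIdx 2) * v (jIdx 2)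
        + m (z (xIdx 2)) * v (xIdx 0) + (m' * z (xIdx 0) + g') * v (xIdx 2) := by
  have hc := hasFDerivAt_coord (z := z)
  have hH : HasFDerivAt (hamiltonian m g) _ z :=
    (((((hc (jIdx 0)).pow 2).add ((hc (jIdx 1)).pow 2)).add
      (((hc (jIdx 2)).pow 2).const_mul (4/3))).add
      ((hm.comp_hasFDerivAt z (hc (xIdx 2))).mul (hc (xIdx 0)))).add
      (hg.comp_hasFDerivAt z (hc (xIdx 2)))
  rw [hH.fderiv]
  simp only [Fin.isValue, Nat.add_one_sub_one, pow_one, nsmul_eq_mul, Nat.cast_ofNat,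
    Function.comp_apply, _root_.add_apply, _root_.smul_apply, ContinuousLinearMap.proj_apply,
    smul_eq_mul]
  ring

theorem gradJ_hamiltonian {m g : ℝ → ℝ} {m' g' : ℝ}
    (hm : HasDerivAt m m' (z (xIdx 2))) (hg : HasDerivAt g g' (z (xIdx 2))) :
    gradJ (hamiltonian m g) z = ![2 * z (jIdx 0), 2 * z (jIdx 1), 8/3 * z (jIdx 2)] := by
  ext i
  fin_cases i <;> simp [gradJ, pd, fderiv_hamiltonian_apply hm hg, jIdx, xIdx]

theorem gradX_hamiltonian {m g : ℝ → ℝ} {m' g' : ℝ}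
    (hm : HasDerivAt m m' (z (xIdx 2))) (hg : HasDerivAt g g' (z (xIdx 2))) :
    gradX (hamiltonian m g) z = ![m (z (xIdx 2)), 0, m' * z (xIdx 0) + g'] := by
  ext i
  fin_cases i <;> simp [gradX, pd, fderiv_hamiltonian_apply hm hg, jIdx, xIdx]

theorem fderiv_cubicIntegral_apply {α : ℝ} {n ℓ g f : ℝ → ℝ} {n' ℓ' g' f' : ℝ}
    (hn : HasDerivAt n n' (z (xIdx 2))) (hℓ : HasDerivAt ℓ ℓ' (z (xIdx 2)))
    (hg : HasDerivAt g g' (z (xIdx 2))) (hf : HasDerivAt f f' (z (xIdx 2))) (v : Fin 6 → ℝ) :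
    fderiv ℝ (cubicIntegral α n ℓ g f) z v
      = (-4*α * z (jIdx 2) * z (jIdx 0) - n (z (xIdx 2))) * v (jIdx 0)
        + (-4*α * z (jIdx 2) * z (jIdx 1)) * v (jIdx 1)
        + (-2*α * (z (jIdx 0)^2 + z (jIdx 1)^2 + 3 * (f (z (xIdx 2)) - α^2) * z (jIdx 2)^2
              + g (z (xIdx 2))) - ℓ (z (xIdx 2)) * z (xIdx 0)) * v (jIdx 2)
        + (-ℓ (z (xIdx 2)) * z (jIdx 2)) * v (xIdx 0)
        + (-2*α * z (jIdx 2) * (f' * z (jIdx 2)^2 + g') - n' * z (jIdx 0)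
            - ℓ' * z (xIdx 0) * z (jIdx 2)) * v (xIdx 2) := by
  have hc := hasFDerivAt_coord (z := z)
  have hx (φ : ℝ → ℝ) {φ' : ℝ} (h : HasDerivAt φ φ' (z (xIdx 2))) :=
    h.comp_hasFDerivAt z (hc (xIdx 2))
  have hP := ((((((hc (jIdx 2)).pow 2).const_mul (-(α^2))).add ((hc (jIdx 0)).pow 2)).add
    ((hc (jIdx 1)).pow 2)).add ((hx f hf).mul ((hc (jIdx 2)).pow 2))).add (hx g hg)
  have hK : HasFDerivAt (cubicIntegral α n ℓ g f) _ z :=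
    ((((hc (jIdx 2)).const_mul (-2*α)).mul hP).sub ((hx n hn).mul (hc (jIdx 0)))).sub
      (((hx ℓ hℓ).mul (hc (xIdx 0))).mul (hc (jIdx 2)))
  rw [hK.fderiv]
  simp only [Fin.isValue, Nat.add_one_sub_one, pow_one, nsmul_eq_mul, Nat.cast_ofNat,
    Function.comp_apply, Pi.add_apply, Pi.mul_apply, _root_.sub_apply, _root_.add_apply,
    _root_.smul_apply, ContinuousLinearMap.proj_apply, smul_eq_mul]
  ring

theorem gradJ_cubicIntegral {α : ℝ} {n ℓ g f : ℝ → ℝ} {n' ℓ' g' f' : ℝ}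
    (hn : HasDerivAt n n' (z (xIdx 2))) (hℓ : HasDerivAt ℓ ℓ' (z (xIdx 2)))
    (hg : HasDerivAt g g' (z (xIdx 2))) (hf : HasDerivAt f f' (z (xIdx 2))) :
    gradJ (cubicIntegral α n ℓ g f) z =
      ![-4*α * z (jIdx 2) * z (jIdx 0) - n (z (xIdx 2)), -4*α * z (jIdx 2) * z (jIdx 1),
        -2*α * (z (jIdx 0)^2 + z (jIdx 1)^2 + 3 * (f (z (xIdx 2)) - α^2) * z (jIdx 2)^2
          + g (z (xIdx 2))) - ℓ (z (xIdx 2)) * z (xIdx 0)] := by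
  ext i
  fin_cases i <;> simp [gradJ, pd, fderiv_cubicIntegral_apply hn hℓ hg hf, jIdx, xIdx]

theorem gradX_cubicIntegral {α : ℝ} {n ℓ g f : ℝ → ℝ} {n' ℓ' g' f' : ℝ}
    (hn : HasDerivAt n n' (z (xIdx 2))) (hℓ : HasDerivAt ℓ ℓ' (z (xIdx 2)))
    (hg : HasDerivAt g g' (z (xIdx 2))) (hf : HasDerivAt f f' (z (xIdx 2))) :
    gradX (cubicIntegral α n ℓ g f) z =
      ![-ℓ (z (xIdx 2)) * z (jIdx 2), 0,
        -2*α * z (jIdx 2) * (f' * z (jIdx 2)^2 + g') - n' * z (jIdx 0)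
          - ℓ' * z (xIdx 0) * z (jIdx 2)] := by
  ext i
  fin_cases i <;> simp [gradX, pd, fderiv_cubicIntegral_apply hn hℓ hg hf, jIdx, xIdx]

end Gradients

theorem e3Bracket_hamiltonian_cubicIntegral {c e α : ℝ} {n m ℓ g f : ℝ → ℝ} (hα : α = 1/3)
    (hn : EqOn n (fun s => c * (s ^ ((1:ℝ)/3)) ^ (1:ℤ)) (Ioi 0))
    (hm : EqOn m (fun s => -c * (s ^ ((1:ℝ)/3)) ^ (-2:ℤ)) (Ioi 0))
    (hℓ : EqOn ℓ (fun s => -(2*c/3) * (s ^ ((1:ℝ)/3)) ^ (-2:ℤ)) (Ioi 0))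
    (hg : EqOn g (fun s => e * (s ^ ((1:ℝ)/3)) ^ (-2:ℤ)) (Ioi 0))
    (hf : EqOn f (fun _ => 1) (Ioi 0)) {z : Fin 6 → ℝ} (hz : 0 < z (xIdx 2)) :
    e3Bracket (hamiltonian m g) (cubicIntegral α n ℓ g f) z
      = -(2*c/3) * (z (xIdx 2) ^ ((1:ℝ)/3)) ^ (-2:ℤ) * z (jIdx 1)
          * (position z ⬝ᵥ angMom z) := by
  have dn := hasDerivAt_of_eqOn_cbrt_zpow hn hz
  have dm := hasDerivAt_of_eqOn_cbrt_zpow hm hz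
  have dℓ := hasDerivAt_of_eqOn_cbrt_zpow hℓ hz
  have dg := hasDerivAt_of_eqOn_cbrt_zpow hg hz
  have df : HasDerivAt f 0 (z (xIdx 2)) :=
    (hasDerivAt_const _ 1).congr_of_eventuallyEq (hf.eventuallyEq_of_mem (Ioi_mem_nhds hz))
  rw [e3Bracket_eq_dotProduct_cross, gradJ_hamiltonian dm dg, gradX_hamiltonian dm dg,
    gradJ_cubicIntegral dn dℓ dg df, gradX_cubicIntegral dn dℓ dg df,
    hn hz, hm hz, hℓ hz, hg hz, hf hz, hα]
  beta_reduce
  have hr3 : (z (xIdx 2) ^ ((1:ℝ)/3)) ^ 3 = z (xIdx 2) := by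
    rw [← Real.rpow_natCast, ← Real.rpow_mul hz.le]; norm_num
  have hr : 0 < z (xIdx 2) ^ ((1:ℝ)/3) := Real.rpow_pos_of_pos hz _
  generalize z (xIdx 2) ^ ((1:ℝ)/3) = r at hr3 hr ⊢
  simp only [cross_apply, dotProduct, Fin.sum_univ_three, position, angMom, Fin.isValue,
    Nat.succ_eq_add_one, Nat.reduceAdd, cons_val_one, cons_val_zero, cons_val, one_div, neg_mul,
    zpow_ofNat, pow_one, inv_pow, Int.reduceNeg, _root_.zpow_neg, sub_neg_eq_add, mul_neg,
    neg_neg, zero_mul, Int.cast_neg, Int.cast_ofNat, Int.reduceSub, zero_add, Int.cast_one,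
    mul_one, mul_zero, sub_zero, zero_sub, Pi.add_apply]
  rw [← hr3]
  field_simp
  ring

/-- The Goryachev system: with `α = 1/3`, `n(x₃) = c x₃^{1/3}`, `g = d/n²`,
`m = −n′/α`, `ℓ = nn″/n′` and `f` given by (fgml), the Hamiltonian
`H₂ = J₁²+J₂²+(4/3)J₃² + m x₁ + g` (which is
`J₁²+J₂²+(4/3)J₃² + c x₁/x₃^{2/3} + d/x₃^{2/3}` after the rescaling
`c → −c`, `d → d/c²`) Poisson-commutes with the cubic integral `K₂` of formula (K)
on the set `x₃ > 0`, `x₁²+x₂²+x₃² = a²`, `x·J = 0`. -/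
theorem goryachev_system_commute (a c d : ℝ) (hc : c ≠ 0) (α : ℝ) (hα : α = 1/3)
    (n m ℓ g f : ℝ → ℝ)
    (hn : n = fun t => c * t ^ ((1:ℝ)/3))
    (hg : g = fun t => d / (n t)^2)
    (hm : m = fun t => -(deriv n t) / α)
    (hℓ : ℓ = fun t => n t * (deriv (deriv n) t) / deriv n t)
    (hf : f = fun t => 1 - 3*α^2
        - α * (3*t*(m t) - 2*(a^2 - t^2)*(deriv m t)) / n t
        + (t*(ℓ t) - (a^2 - t^2)*(deriv ℓ t)) / n t)
    (H K : (Fin 6 → ℝ) → ℝ)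
    (hH : H = fun z => (z (jIdx 0))^2 + (z (jIdx 1))^2
        + (4/3) * (z (jIdx 2))^2
        + m (z (xIdx 2)) * z (xIdx 0) + g (z (xIdx 2)))
    (hK : K = fun z => -2*α*(z (jIdx 2)) *
          (-(α^2)*(z (jIdx 2))^2 + (z (jIdx 0))^2 + (z (jIdx 1))^2
            + f (z (xIdx 2)) * (z (jIdx 2))^2 + g (z (xIdx 2)))
        - n (z (xIdx 2)) * z (jIdx 0)
        - ℓ (z (xIdx 2)) * z (xIdx 0) * z (jIdx 2)) :
    ∀ z : Fin 6 → ℝ, 0 < z (xIdx 2) →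
      (z (xIdx 0))^2 + (z (xIdx 1))^2 + (z (xIdx 2))^2 = a^2 →
      z (xIdx 0) * z (jIdx 0) + z (xIdx 1) * z (jIdx 1) + z (xIdx 2) * z (jIdx 2) = 0 →
      e3Bracket H K z = 0 := by
  intro z hz _ hxJ
  have hn₁ := GoryachevProfile.n_eqOn hn
  have hm₁ := GoryachevProfile.m_eqOn hα hn₁ hm
  have hℓ₁ := GoryachevProfile.ℓ_eqOn hc hn₁ hℓ
  have hcasimir : position z ⬝ᵥ angMom z = 0 := by
    simpa only [dotProduct, Fin.sum_univ_three, position, angMom] using hxJ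
  have hbracket := e3Bracket_hamiltonian_cubicIntegral hα hn₁ hm₁ hℓ₁
    (GoryachevProfile.g_eqOn hn hg) (GoryachevProfile.f_eqOn hc hα hn₁ hm₁ hℓ₁ hf) hz
  rw [show H = hamiltonian m g from hH, show K = cubicIntegral α n ℓ g f from hK, hbracket,
    hcasimir, mul_zero]
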